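/- arXiv:2512.07481 — 2 statements merged into one kernel-verified Lean document; each statement's English description precedes it below -/
import Mathlib

section
/- Lemma 3.2 (barrier estimate). Let n ≥ 1, p > 1, β ∈ (0,1), M₁ > 0, and let Ω ⊂ ℝⁿ be a bounded open set for which there exist ρ > 0 and K > 0 such that the distance function d(x) = dist(x, ℝⁿ \ Ω) is C² on U_ρ = {x ∈ Ω : d(x) < ρ} with |∇d| = 1 and ‖D²d‖ ≤ K on U_ρ. Then there exist M₀ > M₁, ρ₀ ∈ (0, min(ρ,1)) and κ_p > 0, depending only on n, p, β, M₁ and K, such that for every M₂ ≥ M₀, every y ∈ ∂Ω and every x ∈ Ω with 0 < d(x) ≤ ρ₀, the function ψ(x') = M₁ β⁻¹ |x' − y|^β + M₂ β⁻¹ d(x')^β is twice differentiable at x, its gradient ∇ψ(x) = M₁|x − y|^{β−2}(x − y) + M₂ d(x)^{β−1} ∇d(x) is nonzero, and Δ_p ψ(x) = F(∇ψ(x), D²ψ(x)) ≤ κ_p (β − 1) M₂^{p−1} d(x)^{β(p−1) − p}. -/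
/-!
Write `ψ = M₁ β⁻¹ |x - y|^β + M₂ β⁻¹ d^β`, `ξ = ∇ψ(x)` and `F(ξ, X) = |ξ|^{p-4} L_ξ(X)` with
`L_ξ(X) = |ξ|² tr X + (p - 2) ⟨Xξ, ξ⟩` (`FsymLin`) linear in `X`. The Hessian of `ψ` splits
into four pieces:
* the radial part `M₁ (β - 2) |x - y|^{β-4} (x - y) ⊗ (x - y)`, on which `L_ξ ≤ 0` by ellipticity;
* the isotropic part `M₁ |x - y|^{β-2} I`, of size `O(M₁ d^{β-2})` because `d ≤ |x - y|`;
* the normal part `M₂ (β - 1) d^{β-2} ∇d ⊗ ∇d`, on which ellipticity for the unit vector `∇d`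
  gives `L_ξ ≤ -min(p - 1, 1) (1 - β) M₂ d^{β-2} |ξ|²`;
* the curvature part `M₂ d^{β-1} D²d`, of size `O(K M₂ d^{β-1})`.
For `M₂` large the normal part beats the isotropic one, and for `d` small it beats the curvature
one. Since `|ξ|` is comparable to `M₂ d^{β-1}`, the bound `-c M₂ d^{β-2} |ξ|^{p-2}` becomes
`-c' M₂^{p-1} d^{β(p-1)-p}`.
-/

open MeasureTheory Metric Filter Topology

noncomputable section

/-- Hessian matrix `D²φ(x)` of a function `φ` at `x`. -/
def hessMat (n : ℕ) (φ : EuclideanSpace ℝ (Fin n) → ℝ) (x : EuclideanSpace ℝ (Fin n)) :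
    Matrix (Fin n) (Fin n) ℝ :=
  fun i j => iteratedFDeriv ℝ 2 φ x ![EuclideanSpace.single i 1, EuclideanSpace.single j 1]

/-- Quadratic form `⟨M v, v⟩`. -/
def quadForm {ι : Type*} [Fintype ι] (M : Matrix ι ι ℝ) (v : ι → ℝ) : ℝ :=
  ∑ i, M.mulVec v i * v i

/-- The non-variational symbol of the `p`-Laplacian:
`F(ξ, X) = |ξ|^{p-2} tr X + (p-2)|ξ|^{p-4} ⟨Xξ, ξ⟩`. -/
def Fsym (n : ℕ) (p : ℝ) (ξ : EuclideanSpace ℝ (Fin n)) (X : Matrix (Fin n) (Fin n) ℝ) : ℝ :=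
  ‖ξ‖ ^ (p - 2) * X.trace + (p - 2) * ‖ξ‖ ^ (p - 4) * quadForm X (fun i => ξ i)

/-- `v` is viscosity `p`-harmonic in `Ω` at non-critical test points. -/
def ViscPHarmonic (n : ℕ) (p : ℝ) (Ω : Set (EuclideanSpace ℝ (Fin n)))
    (v : EuclideanSpace ℝ (Fin n) → ℝ) : Prop :=
  ∀ x₀ ∈ Ω, ∀ r > (0 : ℝ), ball x₀ r ⊆ Ω →
    ∀ φ : EuclideanSpace ℝ (Fin n) → ℝ, ContDiffOn ℝ 2 φ (ball x₀ r) →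
      φ x₀ = v x₀ → gradient φ x₀ ≠ 0 →
      ((∀ x ∈ ball x₀ r, v x ≤ φ x) →
          0 ≤ Fsym n p (gradient φ x₀) (hessMat n φ x₀)) ∧
      ((∀ x ∈ ball x₀ r, φ x ≤ v x) →
          Fsym n p (gradient φ x₀) (hessMat n φ x₀) ≤ 0)

/-- The distance to the complement of `Ω`. -/
def distFn (n : ℕ) (Ω : Set (EuclideanSpace ℝ (Fin n))) (x : EuclideanSpace ℝ (Fin n)) : ℝ :=
  Metric.infDist x Ωᶜ

open Matrix

theorem norm_rpow_eq_sq_rpow_half {E : Type*} [SeminormedAddGroup E] (v : E) (q : ℝ) :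
    ‖v‖ ^ q = (‖v‖ ^ 2) ^ (q / 2) := by
  rw [← Real.rpow_natCast_mul (norm_nonneg v)]
  ring_nf

theorem norm_sq_rpow {E : Type*} [SeminormedAddGroup E] (v : E) (s : ℝ) :
    (‖v‖ ^ 2) ^ s = ‖v‖ ^ (2 * s) := by
  rw [← Real.rpow_natCast_mul (norm_nonneg v)]
  norm_num

section Gradient

variable {F : Type*} [NormedAddCommGroup F] [InnerProductSpace ℝ F] [CompleteSpace F]

theorem HasDerivAt.comp_hasGradientAt {f : F → ℝ} {g : ℝ → ℝ} {f' x : F} {g' : ℝ}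
    (hg : HasDerivAt g g' (f x)) (hf : HasGradientAt f f' x) :
    HasGradientAt (g ∘ f) (g' • f') x := by
  rw [hasGradientAt_iff_hasFDerivAt, map_smul] at *
  exact hg.comp_hasFDerivAt x hf

theorem hasGradientAt_rpow_comp {f : F → ℝ} {f' x : F} (q : ℝ) (hf : HasGradientAt f f' x)
    (hfx : 0 < f x) : HasGradientAt (fun z => f z ^ q) ((q * f x ^ (q - 1)) • f') x :=
  (Real.hasDerivAt_rpow_const (p := q) (Or.inl hfx.ne')).comp_hasGradientAt hf

theorem hasGradientAt_norm_sub_sq (x y : F) :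
    HasGradientAt (fun z => ‖z - y‖ ^ 2) ((2 : ℝ) • (x - y)) x := by
  rw [hasGradientAt_iff_hasFDerivAt]
  refine ((hasFDerivAt_sub_const (x := x) y).norm_sq).congr_fderiv ?_
  ext v
  simp [two_mul]

theorem hasGradientAt_norm_sub_rpow {x y : F} (q : ℝ) (hxy : x ≠ y) :
    HasGradientAt (fun z => ‖z - y‖ ^ q) ((q * ‖x - y‖ ^ (q - 2)) • (x - y)) x := by
  have hpos : 0 < ‖x - y‖ ^ 2 := by positivity [sub_ne_zero.2 hxy]
  simp_rw [norm_rpow_eq_sq_rpow_half _ q]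
  convert hasGradientAt_rpow_comp (q / 2) (hasGradientAt_norm_sub_sq x y) hpos using 1
  rw [norm_sq_rpow, smul_smul]
  ring_nf

end Gradient

section Hessian

variable {n : ℕ}

theorem hessMat_apply_eq_fderiv_fderiv (φ : EuclideanSpace ℝ (Fin n) → ℝ)
    (x : EuclideanSpace ℝ (Fin n)) (i j : Fin n) :
    hessMat n φ x i j =
      fderiv ℝ (fderiv ℝ φ) x (EuclideanSpace.single i 1) (EuclideanSpace.single j 1) := by
  simp [hessMat, iteratedFDeriv_two_apply]

theorem gradient_apply_eq_fderiv (f : EuclideanSpace ℝ (Fin n) → ℝ)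
    (x : EuclideanSpace ℝ (Fin n)) (i : Fin n) :
    gradient f x i = fderiv ℝ f x (EuclideanSpace.single i 1) := by
  rw [← inner_gradient_left, EuclideanSpace.inner_single_right]
  simp

theorem hessMat_add {f g : EuclideanSpace ℝ (Fin n) → ℝ} {x : EuclideanSpace ℝ (Fin n)}
    (hf : ContDiffAt ℝ 2 f x) (hg : ContDiffAt ℝ 2 g x) :
    hessMat n (f + g) x = hessMat n f x + hessMat n g x := by
  ext i j
  simp [hessMat, iteratedFDeriv_add_apply hf hg]

theorem hessMat_const_smul {f : EuclideanSpace ℝ (Fin n) → ℝ} {x : EuclideanSpace ℝ (Fin n)}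
    (c : ℝ) (hf : ContDiffAt ℝ 2 f x) : hessMat n (c • f) x = c • hessMat n f x := by
  ext i j
  simp [hessMat, iteratedFDeriv_const_smul_apply hf]

theorem hessMat_comp {f : EuclideanSpace ℝ (Fin n) → ℝ} {g g' : ℝ → ℝ} {g'' : ℝ}
    {x : EuclideanSpace ℝ (Fin n)} (hf : ContDiffAt ℝ 2 f x)
    (hg : ∀ᶠ t in 𝓝 (f x), HasDerivAt g (g' t) t) (hg' : HasDerivAt g' g'' (f x)) :
    hessMat n (g ∘ f) x =
      g'' • vecMulVec ⇑(gradient f x) ⇑(gradient f x) + g' (f x) • hessMat n f x := by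
  have hfd : ∀ᶠ z in 𝓝 x, DifferentiableAt ℝ f z :=
    (hf.eventually (by simp)).mono fun z hz => hz.differentiableAt two_ne_zero
  have hfderiv : fderiv ℝ (g ∘ f) =ᶠ[𝓝 x] fun z => g' (f z) • fderiv ℝ f z := by
    filter_upwards [hfd, hf.continuousAt.eventually hg] with z hz hgz
    exact (hgz.comp_hasFDerivAt z hz.hasFDerivAt).fderiv
  have hD2f : HasFDerivAt (fderiv ℝ f) (fderiv ℝ (fderiv ℝ f) x) x :=
    ((hf.fderiv_right (m := 1) le_rfl).differentiableAt one_ne_zero).hasFDerivAt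
  have hD2 : HasFDerivAt (fun z => g' (f z) • fderiv ℝ f z)
      (g' (f x) • fderiv ℝ (fderiv ℝ f) x + (g'' • fderiv ℝ f x).smulRight (fderiv ℝ f x)) x :=
    (hg'.comp_hasFDerivAt x (hf.differentiableAt two_ne_zero).hasFDerivAt).smul hD2f
  ext i j
  rw [hessMat_apply_eq_fderiv_fderiv, hfderiv.fderiv_eq, hD2.fderiv]
  simp [hessMat_apply_eq_fderiv_fderiv, gradient_apply_eq_fderiv, vecMulVec_apply]
  ring

theorem hessMat_rpow_comp {f : EuclideanSpace ℝ (Fin n) → ℝ} {x : EuclideanSpace ℝ (Fin n)}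
    (q : ℝ) (hf : ContDiffAt ℝ 2 f x) (hfx : 0 < f x) :
    hessMat n (fun z => f z ^ q) x =
      (q * (q - 1) * f x ^ (q - 2)) • vecMulVec ⇑(gradient f x) ⇑(gradient f x) +
        (q * f x ^ (q - 1)) • hessMat n f x := by
  have hg : ∀ᶠ t in 𝓝 (f x), HasDerivAt (fun t => t ^ q) (q * t ^ (q - 1)) t := by
    filter_upwards [lt_mem_nhds hfx] with t ht
    exact Real.hasDerivAt_rpow_const (Or.inl ht.ne')
  have hg' := (Real.hasDerivAt_rpow_const (p := q - 1) (Or.inl hfx.ne')).const_mul q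
  rw [sub_sub, one_add_one_eq_two, ← mul_assoc] at hg'
  exact hessMat_comp (g := fun t => t ^ q) hf hg hg'

theorem hessMat_norm_sub_sq (x y : EuclideanSpace ℝ (Fin n)) :
    hessMat n (fun z => ‖z - y‖ ^ 2) x = (2 : ℝ) • 1 := by
  have hfderiv : fderiv ℝ (fun z => ‖z - y‖ ^ 2) = fun z => (2 : ℝ) • innerSL ℝ (z - y) := by
    ext1 z
    rw [(hasGradientAt_norm_sub_sq z y).hasFDerivAt.fderiv, map_smul]
    rfl
  have hD2 : HasFDerivAt (fun z => (2 : ℝ) • innerSL ℝ (z - y))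
      ((2 : ℝ) • (innerSL ℝ).comp (ContinuousLinearMap.id ℝ (EuclideanSpace ℝ (Fin n)))) x :=
    ((innerSL ℝ).hasFDerivAt.comp x (hasFDerivAt_sub_const (x := x) y)).fun_const_smul 2
  ext i j
  rw [hessMat_apply_eq_fderiv_fderiv, hfderiv, hD2.fderiv]
  simp only [FunLike.coe_smul, ContinuousLinearMap.coe_comp, Pi.smul_apply,
    Function.comp_apply, ContinuousLinearMap.coe_id', id_eq]
  rw [innerSL_apply_apply]
  simp [EuclideanSpace.inner_single_left, Matrix.one_apply]

theorem hessMat_norm_sub_rpow {x y : EuclideanSpace ℝ (Fin n)} (q : ℝ) (hxy : x ≠ y) :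
    hessMat n (fun z => ‖z - y‖ ^ q) x =
      (q * (q - 2) * ‖x - y‖ ^ (q - 4)) • vecMulVec ⇑(x - y) ⇑(x - y) +
        (q * ‖x - y‖ ^ (q - 2)) • 1 := by
  have hpos : 0 < ‖x - y‖ ^ 2 := by positivity [sub_ne_zero.2 hxy]
  have hf : ContDiffAt ℝ 2 (fun z : EuclideanSpace ℝ (Fin n) => ‖z - y‖ ^ 2) x :=
    (contDiffAt_id.sub contDiffAt_const).norm_sq ℝ
  simp_rw [norm_rpow_eq_sq_rpow_half _ q]
  rw [hessMat_rpow_comp (q / 2) hf hpos, hessMat_norm_sub_sq,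
    (hasGradientAt_norm_sub_sq x y).gradient, norm_sq_rpow, norm_sq_rpow]
  ext i j
  simp [vecMulVec_apply]
  ring_nf

end Hessian

section Symbol

variable {ι : Type*} [Fintype ι]

theorem quadForm_add (A B : Matrix ι ι ℝ) (v : ι → ℝ) :
    quadForm (A + B) v = quadForm A v + quadForm B v := by
  simp [quadForm, add_mulVec, add_mul, Finset.sum_add_distrib]

theorem quadForm_smul (c : ℝ) (A : Matrix ι ι ℝ) (v : ι → ℝ) :
    quadForm (c • A) v = c * quadForm A v := by
  simp [quadForm, smul_mulVec, Finset.mul_sum, mul_assoc]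

theorem quadForm_one [DecidableEq ι] (ξ : EuclideanSpace ℝ ι) : quadForm 1 ⇑ξ = ‖ξ‖ ^ 2 := by
  rw [EuclideanSpace.real_norm_sq_eq]
  simp [quadForm, sq]

theorem quadForm_vecMulVec_self (a ξ : EuclideanSpace ℝ ι) :
    quadForm (vecMulVec ⇑a ⇑a) ⇑ξ = inner ℝ a ξ ^ 2 := by
  have hinner : inner ℝ a ξ = ⇑a ⬝ᵥ ⇑ξ := by simp [PiLp.inner_apply, dotProduct, mul_comm]
  rw [hinner, sq]
  simp only [quadForm, vecMulVec_mulVec, Pi.smul_apply, op_smul_eq_mul]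
  rw [dotProduct, Finset.mul_sum]
  exact Finset.sum_congr rfl fun i _ => by ring

theorem abs_quadForm_le {H : Matrix ι ι ℝ} {K : ℝ} (hK : 0 ≤ K) (hH : ∀ i j, |H i j| ≤ K)
    (ξ : EuclideanSpace ℝ ι) : |quadForm H ⇑ξ| ≤ K * Fintype.card ι * ‖ξ‖ ^ 2 := by
  calc |quadForm H ⇑ξ| ≤ ∑ i, ∑ j, K * (|ξ i| * |ξ j|) := by
        simp only [quadForm, mulVec, dotProduct, Finset.sum_mul]
        refine (Finset.abs_sum_le_sum_abs _ _).trans (Finset.sum_le_sum fun i _ =>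
          (Finset.abs_sum_le_sum_abs _ _).trans (Finset.sum_le_sum fun j _ => ?_))
        rw [abs_mul, abs_mul]
        calc |H i j| * |ξ j| * |ξ i| ≤ K * |ξ j| * |ξ i| := by gcongr; exact hH i j
          _ = K * (|ξ i| * |ξ j|) := by ring
    _ = K * (∑ i, |ξ i|) ^ 2 := by
        simp_rw [sq, Finset.sum_mul_sum, Finset.mul_sum]
    _ ≤ K * (Fintype.card ι * ∑ i, |ξ i| ^ 2) :=
        mul_le_mul_of_nonneg_left (sq_sum_le_card_mul_sum_sq ..) hK
    _ = K * Fintype.card ι * ‖ξ‖ ^ 2 := by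
        simp [EuclideanSpace.real_norm_sq_eq, mul_assoc]

def FsymLin (p : ℝ) (ξ : EuclideanSpace ℝ ι) (X : Matrix ι ι ℝ) : ℝ :=
  ‖ξ‖ ^ 2 * X.trace + (p - 2) * quadForm X ⇑ξ

theorem FsymLin_add (p : ℝ) (ξ : EuclideanSpace ℝ ι) (A B : Matrix ι ι ℝ) :
    FsymLin p ξ (A + B) = FsymLin p ξ A + FsymLin p ξ B := by
  simp only [FsymLin, trace_add, quadForm_add]
  ring

theorem FsymLin_smul (p c : ℝ) (ξ : EuclideanSpace ℝ ι) (A : Matrix ι ι ℝ) :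
    FsymLin p ξ (c • A) = c * FsymLin p ξ A := by
  simp only [FsymLin, trace_smul, quadForm_smul, smul_eq_mul]
  ring

theorem FsymLin_one [DecidableEq ι] (p : ℝ) (ξ : EuclideanSpace ℝ ι) :
    FsymLin p ξ 1 = (Fintype.card ι + p - 2) * ‖ξ‖ ^ 2 := by
  simp only [FsymLin, trace_one, quadForm_one]
  ring

theorem min_mul_le_FsymLin_vecMulVec_self (p : ℝ) (a ξ : EuclideanSpace ℝ ι) :
    min (p - 1) 1 * (‖a‖ ^ 2 * ‖ξ‖ ^ 2) ≤ FsymLin p ξ (vecMulVec ⇑a ⇑a) := by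
  have hCS : inner ℝ a ξ ^ 2 ≤ ‖a‖ ^ 2 * ‖ξ‖ ^ 2 := by
    rw [← mul_pow]
    exact sq_le_sq' (neg_le_of_abs_le (abs_real_inner_le_norm a ξ)) (real_inner_le_norm a ξ)
  have htrace : (vecMulVec ⇑a ⇑a).trace = ‖a‖ ^ 2 := by
    rw [trace_vecMulVec, EuclideanSpace.real_norm_sq_eq]
    simp [dotProduct, sq]
  rw [FsymLin, htrace, quadForm_vecMulVec_self]
  have ht : 0 ≤ ‖a‖ ^ 2 * ‖ξ‖ ^ 2 := by positivity
  rcases le_total p 2 with hp | hp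
  · nlinarith [min_le_left (p - 1) 1]
  · nlinarith [min_le_right (p - 1) 1, sq_nonneg (inner ℝ a ξ)]

theorem abs_FsymLin_le {H : Matrix ι ι ℝ} {K : ℝ} (hK : 0 ≤ K) (hH : ∀ i j, |H i j| ≤ K)
    (p : ℝ) (ξ : EuclideanSpace ℝ ι) :
    |FsymLin p ξ H| ≤ K * (Fintype.card ι + |p - 2| * Fintype.card ι) * ‖ξ‖ ^ 2 := by
  have htrace : |H.trace| ≤ K * Fintype.card ι := by
    calc |H.trace| ≤ ∑ i, |H i i| := Finset.abs_sum_le_sum_abs _ _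
      _ ≤ ∑ _i : ι, K := Finset.sum_le_sum fun i _ => hH i i
      _ = K * Fintype.card ι := by simp [mul_comm]
  calc |FsymLin p ξ H| ≤ |‖ξ‖ ^ 2 * H.trace| + |(p - 2) * quadForm H ⇑ξ| := abs_add_le _ _
    _ = ‖ξ‖ ^ 2 * |H.trace| + |p - 2| * |quadForm H ⇑ξ| := by
        rw [abs_mul, abs_mul, abs_of_nonneg (sq_nonneg _)]
    _ ≤ ‖ξ‖ ^ 2 * (K * Fintype.card ι) + |p - 2| * (K * Fintype.card ι * ‖ξ‖ ^ 2) := by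
        gcongr
        exact abs_quadForm_le hK hH ξ
    _ = K * (Fintype.card ι + |p - 2| * Fintype.card ι) * ‖ξ‖ ^ 2 := by ring

end Symbol

theorem rpow_sub_four_mul_sq {t : ℝ} (ht : 0 < t) (q : ℝ) : t ^ (q - 4) * t ^ 2 = t ^ (q - 2) := by
  rw [← Real.rpow_two, ← Real.rpow_add ht]
  ring_nf

theorem Fsym_eq_rpow_mul_FsymLin {n : ℕ} (p : ℝ) {ξ : EuclideanSpace ℝ (Fin n)} (hξ : ξ ≠ 0)
    (X : Matrix (Fin n) (Fin n) ℝ) : Fsym n p ξ X = ‖ξ‖ ^ (p - 4) * FsymLin p ξ X := by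
  rw [Fsym, FsymLin, ← rpow_sub_four_mul_sq (norm_pos_iff.2 hξ)]
  ring
theorem two_rpow_neg_abs_mul_rpow_le_rpow {a s : ℝ} (q : ℝ) (ha : 0 < a) (hlow : a / 2 ≤ s)
    (hup : s ≤ 2 * a) : 2 ^ (-|q|) * a ^ q ≤ s ^ q := by
  rcases le_total 0 q with hq | hq
  · calc 2 ^ (-|q|) * a ^ q = (a / 2) ^ q := by
          rw [abs_of_nonneg hq, Real.rpow_neg zero_le_two, Real.div_rpow ha.le zero_le_two]
          ring
      _ ≤ s ^ q := Real.rpow_le_rpow (by positivity) hlow hq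
  · calc 2 ^ (-|q|) * a ^ q = (2 * a) ^ q := by
          rw [abs_of_nonpos hq, neg_neg, Real.mul_rpow zero_le_two ha.le]
      _ ≤ s ^ q := Real.rpow_le_rpow_of_nonpos (by linarith) hup hq

section Barrier

variable {F : Type*} [NormedAddCommGroup F]

def barrier (β M₁ M₂ : ℝ) (y : F) (d : F → ℝ) : F → ℝ :=
  fun x' => M₁ / β * ‖x' - y‖ ^ β + M₂ / β * d x' ^ β

theorem norm_barrierGradient_mem_Icc [NormedSpace ℝ F] {β M₁ M₂ δ : ℝ} {a w : F}
    (hβ : β ≤ 1) (hM₁ : 0 ≤ M₁) (hM₂ : 2 * M₁ ≤ M₂) (hδ : 0 < δ) (hδa : δ ≤ ‖a‖)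
    (hw : ‖w‖ = 1) :
    ‖(M₁ * ‖a‖ ^ (β - 2)) • a + (M₂ * δ ^ (β - 1)) • w‖ ∈
      Set.Icc (M₂ * δ ^ (β - 1) / 2) (2 * (M₂ * δ ^ (β - 1))) := by
  have ha : 0 < ‖a‖ := hδ.trans_le hδa
  have hv0 : 0 ≤ M₂ * δ ^ (β - 1) := mul_nonneg (by linarith) (Real.rpow_nonneg hδ.le _)
  have hu : ‖(M₁ * ‖a‖ ^ (β - 2)) • a‖ ≤ M₂ * δ ^ (β - 1) / 2 := by
    calc ‖(M₁ * ‖a‖ ^ (β - 2)) • a‖ = M₁ * ‖a‖ ^ (β - 1) := by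
          rw [norm_smul, Real.norm_of_nonneg (by positivity), mul_assoc,
            ← Real.rpow_add_one ha.ne']
          ring_nf
      _ ≤ M₁ * δ ^ (β - 1) :=
          mul_le_mul_of_nonneg_left (Real.rpow_le_rpow_of_nonpos hδ hδa (by linarith)) hM₁
      _ ≤ M₂ * δ ^ (β - 1) / 2 := by
          have := Real.rpow_pos_of_pos hδ (β - 1)
          nlinarith
  have hv : ‖(M₂ * δ ^ (β - 1)) • w‖ = M₂ * δ ^ (β - 1) := by
    rw [norm_smul, hw, mul_one, Real.norm_of_nonneg hv0]
  constructor
  · have := norm_sub_norm_le ((M₂ * δ ^ (β - 1)) • w) (-((M₁ * ‖a‖ ^ (β - 2)) • a))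
    rw [norm_neg, sub_neg_eq_add, add_comm] at this
    linarith
  · have := norm_add_le ((M₁ * ‖a‖ ^ (β - 2)) • a) ((M₂ * δ ^ (β - 1)) • w)
    linarith

variable [InnerProductSpace ℝ F] {β M₁ M₂ : ℝ} {x y : F} {d : F → ℝ}

theorem barrier_contDiffAt (hd : ContDiffAt ℝ 2 d x) (hdx : 0 < d x) (hxy : x ≠ y) :
    ContDiffAt ℝ 2 (barrier β M₁ M₂ y d) x := by
  have hxy' : x - y ≠ 0 := sub_ne_zero.2 hxy
  have hnorm : ContDiffAt ℝ 2 (fun z => ‖z - y‖) x :=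
    (contDiffAt_id.sub contDiffAt_const).norm ℝ hxy'
  exact ((hnorm.rpow_const_of_ne (norm_ne_zero_iff.2 hxy')).const_smul (M₁ / β)).add
    ((hd.rpow_const_of_ne hdx.ne').const_smul (M₂ / β))

variable [CompleteSpace F]

theorem hasGradientAt_barrier (hβ : β ≠ 0) {w : F} (hd : HasGradientAt d w x) (hdx : 0 < d x)
    (hxy : x ≠ y) :
    HasGradientAt (barrier β M₁ M₂ y d)
      ((M₁ * ‖x - y‖ ^ (β - 2)) • (x - y) + (M₂ * d x ^ (β - 1)) • w) x := by
  have h₁ := hasGradientAt_iff_hasFDerivAt.1 (hasGradientAt_norm_sub_rpow β hxy)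
  have h₂ := hasGradientAt_iff_hasFDerivAt.1 (hasGradientAt_rpow_comp β hd hdx)
  rw [hasGradientAt_iff_hasFDerivAt]
  refine ((h₁.const_mul (M₁ / β)).add (h₂.const_mul (M₂ / β))).congr_fderiv ?_
  simp only [map_add, map_smul, smul_smul]
  congr 2 <;> field_simp

theorem gradient_barrier_ne_zero (hβ : β ∈ Set.Ioo 0 1) (hM₁ : 0 < M₁) (hM₂ : 2 * M₁ ≤ M₂)
    (hd : DifferentiableAt ℝ d x) (hdx : 0 < d x) (hdxy : d x ≤ ‖x - y‖)
    (hgrad : ‖gradient d x‖ = 1) : gradient (barrier β M₁ M₂ y d) x ≠ 0 := by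
  have hxy : x ≠ y := sub_ne_zero.1 (norm_pos_iff.1 (hdx.trans_le hdxy))
  have hD : 0 < M₂ * d x ^ (β - 1) := mul_pos (by linarith) (Real.rpow_pos_of_pos hdx _)
  rw [(hasGradientAt_barrier hβ.1.ne' hd.hasGradientAt hdx hxy).gradient, ← norm_pos_iff]
  exact (half_pos hD).trans_le (norm_barrierGradient_mem_Icc hβ.2.le hM₁.le hM₂ hdx hdxy hgrad).1

end Barrier

section EuclideanBarrier

variable {n : ℕ} {β M₁ M₂ : ℝ} {x y : EuclideanSpace ℝ (Fin n)} {d : EuclideanSpace ℝ (Fin n) → ℝ}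

theorem hessMat_barrier (hβ : β ≠ 0) (hd : ContDiffAt ℝ 2 d x) (hdx : 0 < d x) (hxy : x ≠ y) :
    hessMat n (barrier β M₁ M₂ y d) x =
      (M₁ * (β - 2) * ‖x - y‖ ^ (β - 4)) • vecMulVec ⇑(x - y) ⇑(x - y) +
        (M₁ * ‖x - y‖ ^ (β - 2)) • 1 +
        (M₂ * (β - 1) * d x ^ (β - 2)) • vecMulVec ⇑(gradient d x) ⇑(gradient d x) +
        (M₂ * d x ^ (β - 1)) • hessMat n d x := by
  have hxy' : x - y ≠ 0 := sub_ne_zero.2 hxy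
  have hnorm : ContDiffAt ℝ 2 (fun z => ‖z - y‖ ^ β) x :=
    ((contDiffAt_id.sub contDiffAt_const).norm ℝ hxy').rpow_const_of_ne (norm_ne_zero_iff.2 hxy')
  have hpow : ContDiffAt ℝ 2 (fun z => d z ^ β) x := hd.rpow_const_of_ne hdx.ne'
  have hsplit : barrier β M₁ M₂ y d =
      (M₁ / β) • (fun z => ‖z - y‖ ^ β) + (M₂ / β) • (fun z => d z ^ β) := rfl
  have hnorm' : ContDiffAt ℝ 2 ((M₁ / β) • fun z => ‖z - y‖ ^ β) x := hnorm.const_smul (M₁ / β)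
  have hpow' : ContDiffAt ℝ 2 ((M₂ / β) • fun z => d z ^ β) x := hpow.const_smul (M₂ / β)
  rw [hsplit, hessMat_add hnorm' hpow', hessMat_const_smul _ hnorm,
    hessMat_const_smul _ hpow, hessMat_norm_sub_rpow β hxy, hessMat_rpow_comp β hd hdx]
  ext i j
  simp only [Matrix.add_apply, Matrix.smul_apply, smul_eq_mul]
  field_simp
  ring

theorem FsymLin_barrierHessian_le {p K δ : ℝ} {a w ξ : EuclideanSpace ℝ (Fin n)}
    {H : Matrix (Fin n) (Fin n) ℝ} (hn : 1 ≤ n) (hp : 1 ≤ p) (hβ : β ≤ 1) (hM₁ : 0 ≤ M₁)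
    (hM₂ : 0 ≤ M₂) (hK : 0 ≤ K) (hδ : 0 < δ) (hδa : δ ≤ ‖a‖) (hw : ‖w‖ = 1)
    (hH : ∀ i j, |H i j| ≤ K) :
    FsymLin p ξ ((M₁ * (β - 2) * ‖a‖ ^ (β - 4)) • vecMulVec ⇑a ⇑a + (M₁ * ‖a‖ ^ (β - 2)) • 1 +
        (M₂ * (β - 1) * δ ^ (β - 2)) • vecMulVec ⇑w ⇑w + (M₂ * δ ^ (β - 1)) • H) ≤
      (M₁ * (n + p - 2) - M₂ * (min (p - 1) 1 * (1 - β) - K * (n + |p - 2| * n) * δ)) *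
        δ ^ (β - 2) * ‖ξ‖ ^ 2 := by
  have ha : 0 < ‖a‖ := hδ.trans_le hδa
  have hm : 0 ≤ min (p - 1) 1 := le_min (by linarith) zero_le_one
  have hnp : (0 : ℝ) ≤ n + p - 2 := by linarith [(Nat.one_le_cast.2 hn : (1 : ℝ) ≤ n)]
  have hδβ : δ ^ (β - 1) = δ ^ (β - 2) * δ := by rw [← Real.rpow_add_one hδ.ne']; ring_nf
  have hFa : 0 ≤ FsymLin p ξ (vecMulVec ⇑a ⇑a) :=
    (mul_nonneg hm (by positivity)).trans (min_mul_le_FsymLin_vecMulVec_self p a ξ)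
  have hFw : min (p - 1) 1 * ‖ξ‖ ^ 2 ≤ FsymLin p ξ (vecMulVec ⇑w ⇑w) := by
    simpa [hw] using min_mul_le_FsymLin_vecMulVec_self p w ξ
  have hFH := abs_FsymLin_le hK hH p ξ
  simp only [Fintype.card_fin] at hFH
  have hr : ‖a‖ ^ (β - 2) ≤ δ ^ (β - 2) := Real.rpow_le_rpow_of_nonpos hδ hδa (by linarith)
  rw [FsymLin_add, FsymLin_add, FsymLin_add, FsymLin_smul, FsymLin_smul, FsymLin_smul,
    FsymLin_smul, FsymLin_one, Fintype.card_fin]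
  have hradial : M₁ * (β - 2) * ‖a‖ ^ (β - 4) * FsymLin p ξ (vecMulVec ⇑a ⇑a) ≤ 0 :=
    mul_nonpos_of_nonpos_of_nonneg
      (mul_nonpos_of_nonpos_of_nonneg (mul_nonpos_of_nonneg_of_nonpos hM₁ (by linarith))
        (by positivity)) hFa
  have hiso : M₁ * ‖a‖ ^ (β - 2) * ((n + p - 2) * ‖ξ‖ ^ 2) ≤
      M₁ * δ ^ (β - 2) * ((n + p - 2) * ‖ξ‖ ^ 2) := by
    gcongr
  have hnormal : M₂ * (β - 1) * δ ^ (β - 2) * FsymLin p ξ (vecMulVec ⇑w ⇑w) ≤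
      M₂ * (β - 1) * δ ^ (β - 2) * (min (p - 1) 1 * ‖ξ‖ ^ 2) :=
    mul_le_mul_of_nonpos_left hFw
      (mul_nonpos_of_nonpos_of_nonneg (mul_nonpos_of_nonneg_of_nonpos hM₂ (by linarith))
        (by positivity))
  have hcurv : M₂ * δ ^ (β - 1) * FsymLin p ξ H ≤
      M₂ * δ ^ (β - 1) * (K * (n + |p - 2| * n) * ‖ξ‖ ^ 2) :=
    mul_le_mul_of_nonneg_left ((le_abs_self _).trans hFH) (by positivity)
  rw [hδβ] at hcurv ⊢
  linarith

theorem Fsym_le_of_FsymLin_le {p β c M δ : ℝ} {ξ : EuclideanSpace ℝ (Fin n)}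
    {X : Matrix (Fin n) (Fin n) ℝ} (hc : 0 ≤ c) (hM : 0 < M) (hδ : 0 < δ)
    (hlow : M * δ ^ (β - 1) / 2 ≤ ‖ξ‖) (hup : ‖ξ‖ ≤ 2 * (M * δ ^ (β - 1)))
    (hlin : FsymLin p ξ X ≤ -(c * M) * δ ^ (β - 2) * ‖ξ‖ ^ 2) :
    Fsym n p ξ X ≤ -(c * 2 ^ (-|p - 2|)) * M ^ (p - 1) * δ ^ (β * (p - 1) - p) := by
  have hD : 0 < M * δ ^ (β - 1) := mul_pos hM (Real.rpow_pos_of_pos hδ _)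
  have hξ : ξ ≠ 0 := norm_pos_iff.1 ((half_pos hD).trans_le hlow)
  rw [Fsym_eq_rpow_mul_FsymLin p hξ]
  calc ‖ξ‖ ^ (p - 4) * FsymLin p ξ X
      ≤ ‖ξ‖ ^ (p - 4) * (-(c * M) * δ ^ (β - 2) * ‖ξ‖ ^ 2) := by gcongr
    _ = -(c * M) * δ ^ (β - 2) * ‖ξ‖ ^ (p - 2) := by
        rw [← rpow_sub_four_mul_sq (norm_pos_iff.2 hξ)]
        ring
    _ ≤ -(c * M) * δ ^ (β - 2) * (2 ^ (-|p - 2|) * (M * δ ^ (β - 1)) ^ (p - 2)) :=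
        mul_le_mul_of_nonpos_left (two_rpow_neg_abs_mul_rpow_le_rpow (p - 2) hD hlow hup)
          (mul_nonpos_of_nonpos_of_nonneg (neg_nonpos.2 (mul_nonneg hc hM.le))
            (Real.rpow_nonneg hδ.le _))
    _ = -(c * 2 ^ (-|p - 2|)) * M ^ (p - 1) * δ ^ (β * (p - 1) - p) := by
        rw [Real.mul_rpow hM.le (Real.rpow_nonneg hδ.le _), ← Real.rpow_mul hδ.le,
          show β * (p - 1) - p = β - 2 + (β - 1) * (p - 2) by ring, Real.rpow_add hδ,
          show M ^ (p - 1) = M ^ (p - 2) * M by rw [← Real.rpow_add_one hM.ne']; ring_nf]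
        ring

theorem Fsym_barrier_le {p K : ℝ} (hn : 1 ≤ n) (hp : 1 < p) (hβ : β ∈ Set.Ioo 0 1)
    (hM₁ : 0 < M₁) (hK : 0 ≤ K) (hd : ContDiffAt ℝ 2 d x) (hdx : 0 < d x)
    (hdxy : d x ≤ ‖x - y‖) (hgrad : ‖gradient d x‖ = 1) (hH : ∀ i j, |hessMat n d x i j| ≤ K)
    (hM₂ : 2 * M₁ ≤ M₂) (hM₂c : 4 * (M₁ * (n + p - 2)) ≤ M₂ * (min (p - 1) 1 * (1 - β)))
    (hdc : d x * (4 * (K * (n + |p - 2| * n))) ≤ min (p - 1) 1 * (1 - β)) :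
    Fsym n p (gradient (barrier β M₁ M₂ y d) x) (hessMat n (barrier β M₁ M₂ y d) x) ≤
      (min (p - 1) 1 / 2 * 2 ^ (-|p - 2|)) * (β - 1) * M₂ ^ (p - 1) *
        d x ^ (β * (p - 1) - p) := by
  obtain ⟨hβ0, hβ1⟩ := hβ
  have hxy : x ≠ y := sub_ne_zero.1 (norm_pos_iff.1 (hdx.trans_le hdxy))
  have hM₂0 : 0 < M₂ := by linarith
  have hc : 0 ≤ min (p - 1) 1 * (1 - β) / 2 :=
    div_nonneg (mul_nonneg (le_min (by linarith) zero_le_one) (by linarith)) zero_le_two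
  rw [(hasGradientAt_barrier hβ0.ne' (hd.differentiableAt two_ne_zero).hasGradientAt hdx
    hxy).gradient, hessMat_barrier hβ0.ne' hd hdx hxy]
  obtain ⟨hlow, hup⟩ := norm_barrierGradient_mem_Icc hβ1.le hM₁.le hM₂ hdx hdxy hgrad
  refine (Fsym_le_of_FsymLin_le hc hM₂0 hdx hlow hup ?_).trans_eq (by ring)
  refine (FsymLin_barrierHessian_le hn hp.le hβ1.le hM₁.le hM₂0.le hK hdx hdxy hgrad hH).trans ?_
  gcongr
  nlinarith

end EuclideanBarrier

theorem distFn_le_norm_sub_of_mem_frontier {n : ℕ} {Ω : Set (EuclideanSpace ℝ (Fin n))}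
    (hΩ : IsOpen Ω) {y : EuclideanSpace ℝ (Fin n)} (hy : y ∈ frontier Ω)
    (x : EuclideanSpace ℝ (Fin n)) : distFn n Ω x ≤ ‖x - y‖ := by
  rw [hΩ.frontier_eq] at hy
  exact (infDist_le_dist_of_mem hy.2).trans_eq (dist_eq_norm x y)

theorem IsOpen.setOf_distFn_lt {n : ℕ} {Ω : Set (EuclideanSpace ℝ (Fin n))} (hΩ : IsOpen Ω)
    (ρ : ℝ) : IsOpen {x ∈ Ω | distFn n Ω x < ρ} :=
  hΩ.inter (isOpen_lt (continuous_infDist_pt _) continuous_const)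

theorem barrier_estimate_general
    (n : ℕ) (hn : 1 ≤ n) (p β M₁ : ℝ) (hp : 1 < p) (hβ : β ∈ Set.Ioo (0 : ℝ) 1)
    (hM₁ : 0 < M₁)
    (Ω : Set (EuclideanSpace ℝ (Fin n))) (hΩo : IsOpen Ω)
    (ρ K : ℝ) (hρ : 0 < ρ) (hK : 0 < K)
    (hd2 : ContDiffOn ℝ 2 (distFn n Ω) {x ∈ Ω | distFn n Ω x < ρ})
    (hgrad : ∀ x ∈ {x ∈ Ω | distFn n Ω x < ρ}, ‖gradient (distFn n Ω) x‖ = 1)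
    (hhess : ∀ x ∈ {x ∈ Ω | distFn n Ω x < ρ}, ∀ i j, |hessMat n (distFn n Ω) x i j| ≤ K) :
    ∃ M₀ > M₁, ∃ ρ₀ ∈ Set.Ioo (0 : ℝ) (min ρ 1), ∃ κp > (0 : ℝ),
      ∀ M₂ ≥ M₀, ∀ y ∈ frontier Ω, ∀ x ∈ Ω,
        0 < distFn n Ω x → distFn n Ω x ≤ ρ₀ →
        ContDiffAt ℝ 2
          (fun x' => M₁ / β * ‖x' - y‖ ^ β + M₂ / β * (distFn n Ω x') ^ β) x ∧
        gradient (fun x' => M₁ / β * ‖x' - y‖ ^ β + M₂ / β * (distFn n Ω x') ^ β) x =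
          (M₁ * ‖x - y‖ ^ (β - 2)) • (x - y) +
            (M₂ * (distFn n Ω x) ^ (β - 1)) • gradient (distFn n Ω) x ∧
        gradient (fun x' => M₁ / β * ‖x' - y‖ ^ β + M₂ / β * (distFn n Ω x') ^ β) x ≠ 0 ∧
        Fsym n p
            (gradient (fun x' => M₁ / β * ‖x' - y‖ ^ β + M₂ / β * (distFn n Ω x') ^ β) x)
            (hessMat n (fun x' => M₁ / β * ‖x' - y‖ ^ β + M₂ / β * (distFn n Ω x') ^ β) x)
          ≤ κp * (β - 1) * M₂ ^ (p - 1) * (distFn n Ω x) ^ (β * (p - 1) - p) := by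
  set c := min (p - 1) 1 * (1 - β)
  set A := K * (n + |p - 2| * n)
  have hn' : (1 : ℝ) ≤ n := by exact_mod_cast hn
  have hc : 0 < c := mul_pos (lt_min (by linarith) one_pos) (by linarith [hβ.2])
  have hA : 0 < 4 * A := mul_pos four_pos (mul_pos hK (by positivity))
  have hM₀ : 0 ≤ 4 * (M₁ * (n + p - 2)) / c :=
    div_nonneg (mul_nonneg zero_le_four (mul_nonneg hM₁.le (by linarith))) hc.le
  have hρ1 : 0 < min ρ 1 := lt_min hρ one_pos
  refine ⟨2 * M₁ + 4 * (M₁ * (n + p - 2)) / c, by linarith, min (c / (4 * A)) (min ρ 1 / 2),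
    ⟨lt_min (div_pos hc hA) (half_pos hρ1), (min_le_right _ _).trans_lt (half_lt_self hρ1)⟩,
    min (p - 1) 1 / 2 * 2 ^ (-|p - 2|),
    mul_pos (half_pos (lt_min (by linarith) one_pos)) (Real.rpow_pos_of_pos two_pos _), ?_⟩
  intro M₂ hM₂ y hy x hx hdx hdρ
  have hdxy := distFn_le_norm_sub_of_mem_frontier hΩo hy x
  have hxy : x ≠ y := sub_ne_zero.1 (norm_pos_iff.1 (hdx.trans_le hdxy))
  have hxU : x ∈ {x ∈ Ω | distFn n Ω x < ρ} :=
    ⟨hx, by linarith [min_le_right (c / (4 * A)) (min ρ 1 / 2), min_le_left ρ 1]⟩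
  have hd := hd2.contDiffAt ((hΩo.setOf_distFn_lt ρ).mem_nhds hxU)
  have hd' := hd.differentiableAt two_ne_zero
  have hM₂M₁ : 2 * M₁ ≤ M₂ := by linarith
  exact ⟨barrier_contDiffAt hd hdx hxy,
    (hasGradientAt_barrier hβ.1.ne' hd'.hasGradientAt hdx hxy).gradient,
    gradient_barrier_ne_zero hβ hM₁ hM₂M₁ hd' hdx hdxy (hgrad x hxU),
    Fsym_barrier_le hn hp hβ hM₁ hK.le hd hdx hdxy (hgrad x hxU) (hhess x hxU) hM₂M₁
      ((div_le_iff₀ hc).1 (by linarith)) ((le_div_iff₀ hA).1 (hdρ.trans (min_le_left _ _)))⟩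

/-- **Lemma 3.2** (barrier estimate for the `p`-Laplacian near a `C²` boundary). -/
theorem barrier_estimate
    (n : ℕ) (hn : 1 ≤ n) (p β M₁ : ℝ) (hp : 1 < p) (hβ : β ∈ Set.Ioo (0 : ℝ) 1)
    (hM₁ : 0 < M₁)
    (Ω : Set (EuclideanSpace ℝ (Fin n))) (hΩo : IsOpen Ω) (hΩb : Bornology.IsBounded Ω)
    (ρ K : ℝ) (hρ : 0 < ρ) (hK : 0 < K)
    (hd2 : ContDiffOn ℝ 2 (distFn n Ω) {x ∈ Ω | distFn n Ω x < ρ})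
    (hgrad : ∀ x ∈ {x ∈ Ω | distFn n Ω x < ρ}, ‖gradient (distFn n Ω) x‖ = 1)
    (hhess : ∀ x ∈ {x ∈ Ω | distFn n Ω x < ρ}, ∀ i j, |hessMat n (distFn n Ω) x i j| ≤ K) :
    ∃ M₀ > M₁, ∃ ρ₀ ∈ Set.Ioo (0 : ℝ) (min ρ 1), ∃ κp > (0 : ℝ),
      ∀ M₂ ≥ M₀, ∀ y ∈ frontier Ω, ∀ x ∈ Ω,
        0 < distFn n Ω x → distFn n Ω x ≤ ρ₀ →
        ContDiffAt ℝ 2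
          (fun x' => M₁ / β * ‖x' - y‖ ^ β + M₂ / β * (distFn n Ω x') ^ β) x ∧
        gradient (fun x' => M₁ / β * ‖x' - y‖ ^ β + M₂ / β * (distFn n Ω x') ^ β) x =
          (M₁ * ‖x - y‖ ^ (β - 2)) • (x - y) +
            (M₂ * (distFn n Ω x) ^ (β - 1)) • gradient (distFn n Ω) x ∧
        gradient (fun x' => M₁ / β * ‖x' - y‖ ^ β + M₂ / β * (distFn n Ω x') ^ β) x ≠ 0 ∧
        Fsym n p
            (gradient (fun x' => M₁ / β * ‖x' - y‖ ^ β + M₂ / β * (distFn n Ω x') ^ β) x)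
            (hessMat n (fun x' => M₁ / β * ‖x' - y‖ ^ β + M₂ / β * (distFn n Ω x') ^ β) x)
          ≤ κp * (β - 1) * M₂ ^ (p - 1) * (distFn n Ω x) ^ (β * (p - 1) - p) :=
  barrier_estimate_general n hn p β M₁ hp hβ hM₁ Ω hΩo ρ K hρ hK hd2 hgrad hhess
end
end

section
/- Lemma 2.1 (stability of Gram–Schmidt orthonormalization). For every n ≥ 1 there exist constants κ > 0 and ρ₀ ∈ (0,1), depending only on n, such that the following holds for every ρ ∈ (0, ρ₀]. Let (e₀, ν₁, …, ν_{n−1}) be an orthonormal basis of ℝⁿ and let u ∈ ℝⁿ be a unit vector with ⟨u, e₀⟩ ≥ (1 − ρ)/(1 + ρ). Define recursively ν̆₁ = ν₁ − ⟨u, ν₁⟩u, ν̃₁ = ν̆₁/|ν̆₁|, and for i = 2, …, n−1, ν̆_i = ν_i − (⟨u, ν_i⟩u + Σ_{j=1}^{i−1} ⟨ν̃_j, ν_i⟩ν̃_j), ν̃_i = ν̆_i/|ν̆_i|. Then all ν̆_i are nonzero, (u, ν̃₁, …, ν̃_{n−1}) is an orthonormal basis of ℝⁿ, and |u − e₀|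 ≤ κ√ρ and |ν_i − ν̃_i| ≤ κ√ρ for i = 1, …, n−1. -/
open scoped RealInnerProductSpace

/-!
Since `⟪u, e₀⟫ ≥ (1 - ρ) / (1 + ρ)`, we get `|u - e₀|² ≤ 4ρ`. As `ν_i` is orthogonal to `e₀` and
to the `ν_j`, the coefficients `⟪u, ν_i⟫` and `⟪ν̃_j, ν_i⟫` are bounded by `|u - e₀|` and
`|ν_j - ν̃_j|`, so `|ν_i - ν̆_i| ≤ |u - e₀| + ∑_{j<i} |ν_j - ν̃_j|`; normalizing at most doubles
this error. A discrete Grönwall argument then bounds all errors by `3ⁱ |u - e₀| = O(√ρ)`. For `ρ`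
small they stay below `1 = |ν_i|`, so no `ν̆_i` vanishes, and orthonormality is the usual
Gram–Schmidt induction.
-/

open Finset

section

variable {E : Type*} [NormedAddCommGroup E] [InnerProductSpace ℝ E]

theorem abs_real_inner_le_norm_sub_mul_of_inner_eq_zero {x y : E} (z : E) (h : ⟪x, y⟫ = 0) :
    |⟪z, y⟫| ≤ ‖z - x‖ * ‖y‖ := by
  simpa [inner_sub_left, h] using abs_real_inner_le_norm (z - x) y

theorem norm_inv_norm_smul_of_ne_zero {y : E} (hy : y ≠ 0) : ‖‖y‖⁻¹ • y‖ = 1 := by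
  simpa using norm_smul_inv_norm (𝕜 := ℝ) hy

theorem norm_inv_norm_smul_le_one (y : E) : ‖‖y‖⁻¹ • y‖ ≤ 1 := by
  rcases eq_or_ne y 0 with rfl | hy
  · simp
  · exact (norm_inv_norm_smul_of_ne_zero hy).le

theorem norm_sub_inv_norm_smul_le {x : E} (hx : ‖x‖ = 1) (y : E) :
    ‖x - ‖y‖⁻¹ • y‖ ≤ 2 * ‖x - y‖ := by
  rcases eq_or_ne y 0 with rfl | hy
  · simp [hx]
  have hy' : 0 < ‖y‖ := norm_pos_iff.2 hy
  have hscale : ‖y - ‖y‖⁻¹ • y‖ = |‖y‖ - ‖x‖| := by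
    rw [show y - ‖y‖⁻¹ • y = (1 - ‖y‖⁻¹) • y by rw [sub_smul, one_smul], norm_smul,
      Real.norm_eq_abs, hx, ← abs_of_pos hy', ← abs_mul, abs_of_pos hy', sub_mul, one_mul,
      inv_mul_cancel₀ hy'.ne']
  calc ‖x - ‖y‖⁻¹ • y‖ ≤ ‖x - y‖ + ‖y - ‖y‖⁻¹ • y‖ := norm_sub_le_norm_sub_add_norm_sub _ _ _
    _ ≤ ‖x - y‖ + ‖x - y‖ := by
        rw [hscale, norm_sub_rev x y]; gcongr; exact abs_norm_sub_norm_le _ _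
    _ = 2 * ‖x - y‖ := by ring

theorem norm_sub_le_two_mul_sqrt_of_le_inner {x y : E} (hx : ‖x‖ = 1) (hy : ‖y‖ = 1) {ρ : ℝ}
    (hρ : 0 ≤ ρ) (h : (1 - ρ) / (1 + ρ) ≤ ⟪x, y⟫) : ‖x - y‖ ≤ 2 * Real.sqrt ρ := by
  have hsq : ‖x - y‖ ^ 2 ≤ 4 * ρ := by
    rw [div_le_iff₀ (by linarith)] at h
    rw [norm_sub_sq_real, hx, hy]
    nlinarith [real_inner_le_norm x y]
  calc ‖x - y‖ = Real.sqrt (‖x - y‖ ^ 2) := (Real.sqrt_sq (norm_nonneg _)).symm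
    _ ≤ Real.sqrt (4 * ρ) := Real.sqrt_le_sqrt hsq
    _ = 2 * Real.sqrt ρ := by
        rw [Real.sqrt_mul (by norm_num), show (4 : ℝ) = 2 ^ 2 by norm_num,
          Real.sqrt_sq (by norm_num)]

theorem Orthonormal.finCons {m : ℕ} {x : E} {f : Fin m → E} (hf : Orthonormal ℝ f)
    (hx : ‖x‖ = 1) (hxf : ∀ i, ⟪x, f i⟫ = 0) :
    Orthonormal ℝ (Fin.cons x f : Fin (m + 1) → E) := by
  refine ⟨Fin.cases hx hf.1, fun i j hij => ?_⟩
  cases i using Fin.cases <;> cases j using Fin.cases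
  · exact absurd rfl hij
  · exact hxf _
  · simpa [real_inner_comm] using hxf _
  · exact hf.2 fun h => hij (congrArg Fin.succ h)

end

theorem add_sum_range_le_pow_mul {a : ℕ → ℝ} {c δ : ℝ} (hc : 0 ≤ c) {n : ℕ}
    (h : ∀ k < n, a k ≤ c * (δ + ∑ j ∈ range k, a j)) {k : ℕ} (hk : k ≤ n) :
    δ + ∑ j ∈ range k, a j ≤ (1 + c) ^ k * δ := by
  induction k with
  | zero => simp
  | succ k ih =>
    have ih := ih (by omega)
    calc δ + ∑ j ∈ range (k + 1), a j ≤ (1 + c) * (δ + ∑ j ∈ range k, a j) := by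
          rw [sum_range_succ]; linarith [h k (by omega)]
      _ ≤ (1 + c) * ((1 + c) ^ k * δ) := by gcongr
      _ = (1 + c) ^ (k + 1) * δ := by ring

/-- `breve i` and `tilde i` are the paper's `ν̆_i` and `ν̃_i`: Gram–Schmidt applied to `v`,
after the unit vector `u`. -/
structure IsGramSchmidtCompletion {E ι : Type*} [NormedAddCommGroup E] [InnerProductSpace ℝ E]
    [Fintype ι] [LinearOrder ι] (u : E) (v breve tilde : ι → E) : Prop where
  breve_eq : ∀ i, breve i = v i -
    (⟪u, v i⟫ • u + ∑ j ∈ univ.filter (fun j => j < i), ⟪tilde j, v i⟫ • tilde j)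
  tilde_eq : ∀ i, tilde i = ‖breve i‖⁻¹ • breve i

namespace IsGramSchmidtCompletion

section

variable {E ι : Type*} [NormedAddCommGroup E] [InnerProductSpace ℝ E] [Fintype ι] [LinearOrder ι]
  {e₀ u : E} {v breve tilde : ι → E}

theorem inner_breve (h : IsGramSchmidtCompletion u v breve tilde) (w : E) (i : ι) :
    ⟪w, breve i⟫ = ⟪w, v i⟫ - (⟪u, v i⟫ * ⟪w, u⟫ +
      ∑ j ∈ univ.filter (fun j => j < i), ⟪tilde j, v i⟫ * ⟪w, tilde j⟫) := by
  simp only [h.breve_eq i, inner_sub_right, inner_add_right, inner_smul_right, inner_sum]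

theorem inner_eq_zero (h : IsGramSchmidtCompletion u v breve tilde) (hu : ‖u‖ = 1)
    (hne : ∀ i, breve i ≠ 0) (i : ι) :
    ⟪u, tilde i⟫ = 0 ∧ ∀ l < i, ⟪tilde l, tilde i⟫ = 0 := by
  induction i using WellFoundedLT.induction with
  | _ i ih =>
  suffices ⟪u, breve i⟫ = 0 ∧ ∀ l < i, ⟪tilde l, breve i⟫ = 0 by
    simp only [h.tilde_eq i, inner_smul_right, this.1, mul_zero, true_and]
    intro l hl
    rw [this.2 l hl, mul_zero]
  constructor
  · rw [h.inner_breve, real_inner_self_eq_norm_sq, hu,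
      sum_eq_zero fun j hj => by rw [(ih j (mem_filter.1 hj).2).1, mul_zero]]
    ring
  · intro l hl
    have hl' : l ∈ univ.filter (fun j => j < i) := mem_filter.2 ⟨mem_univ l, hl⟩
    rw [h.inner_breve, real_inner_comm u (tilde l), (ih l hl).1,
      sum_eq_single_of_mem l hl' fun j hj hjl => ?_, real_inner_self_eq_norm_sq,
      h.tilde_eq l, norm_inv_norm_smul_of_ne_zero (hne l)]
    · ring
    · rcases lt_or_gt_of_ne hjl with hjl | hlj
      · rw [real_inner_comm (tilde j) (tilde l), (ih l hl).2 j hjl, mul_zero]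
      · rw [(ih j (mem_filter.1 hj).2).2 l hlj, mul_zero]

theorem orthonormal (h : IsGramSchmidtCompletion u v breve tilde) (hu : ‖u‖ = 1)
    (hne : ∀ i, breve i ≠ 0) : Orthonormal ℝ tilde := by
  refine ⟨fun i => by rw [h.tilde_eq i, norm_inv_norm_smul_of_ne_zero (hne i)],
    fun l i hli => ?_⟩
  rcases lt_or_gt_of_ne hli with hli | hil
  · exact (h.inner_eq_zero hu hne i).2 l hli
  · rw [real_inner_comm]; exact (h.inner_eq_zero hu hne l).2 i hil

theorem norm_sub_tilde_le (h : IsGramSchmidtCompletion u v breve tilde) {i : ι}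
    (hvi : ‖v i‖ = 1) : ‖v i - tilde i‖ ≤ 2 * ‖v i - breve i‖ :=
  h.tilde_eq i ▸ norm_sub_inv_norm_smul_le hvi _

theorem norm_sub_breve_le (h : IsGramSchmidtCompletion u v breve tilde) (hv : Orthonormal ℝ v)
    (he : ∀ i, ⟪e₀, v i⟫ = 0) (hu : ‖u‖ = 1) (i : ι) :
    ‖v i - breve i‖ ≤ ‖u - e₀‖ + ∑ j ∈ univ.filter (fun j => j < i), ‖v j - tilde j‖ := by
  have hu_term : ‖⟪u, v i⟫ • u‖ ≤ ‖u - e₀‖ := by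
    simpa [norm_smul, hu, hv.1 i] using
      abs_real_inner_le_norm_sub_mul_of_inner_eq_zero u (he i)
  have htilde_term : ∀ j ∈ univ.filter (fun j => j < i),
      ‖⟪tilde j, v i⟫ • tilde j‖ ≤ ‖v j - tilde j‖ := by
    intro j hj
    have hji : ⟪v j, v i⟫ = 0 := hv.2 (mem_filter.1 hj).2.ne
    calc ‖⟪tilde j, v i⟫ • tilde j‖ ≤ ‖tilde j - v j‖ * ‖v i‖ * 1 := by
          rw [norm_smul, Real.norm_eq_abs]
          gcongr
          · exact abs_real_inner_le_norm_sub_mul_of_inner_eq_zero _ hji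
          · rw [h.tilde_eq j]; exact norm_inv_norm_smul_le_one _
      _ = ‖v j - tilde j‖ := by rw [hv.1 i, mul_one, mul_one, norm_sub_rev]
  calc ‖v i - breve i‖
      = ‖⟪u, v i⟫ • u + ∑ j ∈ univ.filter (fun j => j < i), ⟪tilde j, v i⟫ • tilde j‖ := by
        rw [h.breve_eq i, sub_sub_cancel]
    _ ≤ ‖u - e₀‖ + ∑ j ∈ univ.filter (fun j => j < i), ‖v j - tilde j‖ :=
        (norm_add_le _ _).trans
          (add_le_add hu_term ((norm_sum_le _ _).trans (sum_le_sum htilde_term)))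

end

section

variable {E : Type*} [NormedAddCommGroup E] [InnerProductSpace ℝ E] {m : ℕ} {e₀ u : E}
  {v breve tilde : Fin m → E}

theorem orthonormal_cons (h : IsGramSchmidtCompletion u v breve tilde) (hu : ‖u‖ = 1)
    (hne : ∀ i, breve i ≠ 0) : Orthonormal ℝ (Fin.cons u tilde : Fin (m + 1) → E) :=
  (h.orthonormal hu hne).finCons hu fun i => (h.inner_eq_zero hu hne i).1

theorem norm_sub_breve_le_three_pow (h : IsGramSchmidtCompletion u v breve tilde)
    (hv : Orthonormal ℝ v) (he : ∀ i, ⟪e₀, v i⟫ = 0) (hu : ‖u‖ = 1) (i : Fin m) :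
    ‖v i - breve i‖ ≤ 3 ^ (i : ℕ) * ‖u - e₀‖ := by
  set a : ℕ → ℝ := fun k => if hk : k < m then ‖v ⟨k, hk⟩ - tilde ⟨k, hk⟩‖ else 0
  have hstep : ∀ i : Fin m, ‖v i - breve i‖ ≤ ‖u - e₀‖ + ∑ k ∈ range i, a k := by
    intro i
    have hsum : ∑ j ∈ univ.filter (fun j => j < i), ‖v j - tilde j‖ = ∑ k ∈ range i, a k := by
      rw [filter_gt_eq_Iio, ← Nat.Iio_eq_range, ← Fin.map_valEmbedding_Iio, sum_map]
      simp [a]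
    exact hsum ▸ h.norm_sub_breve_le hv he hu i
  have hgrowth : ‖u - e₀‖ + ∑ k ∈ range i, a k ≤ (1 + 2) ^ (i : ℕ) * ‖u - e₀‖ :=
    add_sum_range_le_pow_mul zero_le_two (fun k hk => by
      simpa only [a, dif_pos hk] using (h.norm_sub_tilde_le (hv.1 _)).trans
        (mul_le_mul_of_nonneg_left (hstep ⟨k, hk⟩) zero_le_two)) i.isLt.le
  calc ‖v i - breve i‖ ≤ ‖u - e₀‖ + ∑ k ∈ range i, a k := hstep i
    _ ≤ (1 + 2) ^ (i : ℕ) * ‖u - e₀‖ := hgrowth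
    _ = 3 ^ (i : ℕ) * ‖u - e₀‖ := by norm_num

end

end IsGramSchmidtCompletion

/-- Here `n = m + 1`, `e₀ = b 0` and `ν_i = b i.succ`. -/
theorem gram_schmidt_stability (m : ℕ) :
    ∃ κ > (0 : ℝ), ∃ ρ₀ ∈ Set.Ioo (0 : ℝ) 1, ∀ ρ ∈ Set.Ioc (0 : ℝ) ρ₀,
      ∀ b : OrthonormalBasis (Fin (m + 1)) ℝ (EuclideanSpace ℝ (Fin (m + 1))),
      ∀ u : EuclideanSpace ℝ (Fin (m + 1)), ‖u‖ = 1 →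
        (1 - ρ) / (1 + ρ) ≤ ⟪u, b 0⟫ →
        ∀ breveNu tildeNu : Fin m → EuclideanSpace ℝ (Fin (m + 1)),
          (∀ i : Fin m,
            breveNu i = b i.succ -
              (⟪u, b i.succ⟫ • u +
                ∑ j ∈ Finset.univ.filter (fun j => j < i), ⟪tildeNu j, b i.succ⟫ • tildeNu j)) →
          (∀ i : Fin m, tildeNu i = ‖breveNu i‖⁻¹ • breveNu i) →
          (∀ i : Fin m, breveNu i ≠ 0) ∧
          Orthonormal ℝ (Fin.cons u tildeNu : Fin (m + 1) → EuclideanSpace ℝ (Fin (m + 1))) ∧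
          Submodule.span ℝ
              (Set.range (Fin.cons u tildeNu : Fin (m + 1) → EuclideanSpace ℝ (Fin (m + 1))))
            = ⊤ ∧
          ‖u - b 0‖ ≤ κ * Real.sqrt ρ ∧
          (∀ i : Fin m, ‖b i.succ - tildeNu i‖ ≤ κ * Real.sqrt ρ) := by
  set κ : ℝ := 4 * 3 ^ m with hκ
  have hκ2 : 2 ≤ κ := by
    rw [hκ]; nlinarith [one_le_pow₀ (M₀ := ℝ) (a := 3) (n := m) (by norm_num)]
  refine ⟨κ, by linarith, κ⁻¹ ^ 2, ⟨by positivity, pow_lt_one₀ (by positivity)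
    (inv_lt_one_of_one_lt₀ (by linarith)) two_ne_zero⟩, ?_⟩
  rintro ρ ⟨hρ0, hρ⟩ b u hu hub breve tilde hbreve htilde
  have hκρ : κ * Real.sqrt ρ ≤ 1 := by
    have := Real.sqrt_le_sqrt hρ
    rw [Real.sqrt_sq (by positivity)] at this
    rwa [← le_div_iff₀' (by linarith), one_div]
  have hgs : IsGramSchmidtCompletion u (fun i => b i.succ) breve tilde := ⟨hbreve, htilde⟩
  have hv : Orthonormal ℝ fun i : Fin m => b i.succ := b.orthonormal.comp _ (Fin.succ_injective _)
  have he : ∀ i : Fin m, ⟪b 0, b i.succ⟫ = 0 := fun i => b.orthonormal.2 (Fin.succ_ne_zero i).symm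
  have hδ : ‖u - b 0‖ ≤ 2 * Real.sqrt ρ :=
    norm_sub_le_two_mul_sqrt_of_le_inner hu (b.orthonormal.1 0) hρ0.le hub
  have hbreve_close : ∀ i, ‖b i.succ - breve i‖ ≤ κ / 2 * Real.sqrt ρ := fun i =>
    calc ‖b i.succ - breve i‖ ≤ 3 ^ (i : ℕ) * ‖u - b 0‖ :=
          hgs.norm_sub_breve_le_three_pow hv he hu i
      _ ≤ 3 ^ m * (2 * Real.sqrt ρ) := by gcongr; exacts [by norm_num, i.isLt.le]
      _ = κ / 2 * Real.sqrt ρ := by ring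
  have hne : ∀ i, breve i ≠ 0 := fun i h0 => by
    have := hbreve_close i
    rw [h0, sub_zero, hv.1 i] at this
    linarith
  have hON := hgs.orthonormal_cons hu hne
  refine ⟨hne, hON, hON.linearIndependent.span_eq_top_of_card_eq_finrank (by simp),
    hδ.trans (by gcongr), fun i => ?_⟩
  linarith [hgs.norm_sub_tilde_le (hv.1 i), hbreve_close i]
end
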